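/- Let θ₁ < θ₂ < θ₃ < θ₄ be real numbers with θ₄ − θ₁ < 2π, and set η = (sin((θ₂−θ₁)/2)·sin((θ₄−θ₃)/2)) / (sin((θ₃−θ₁)/2)·sin((θ₄−θ₂)/2)). Then for every θ ∈ ℝ, β^{[θ₁,θ₃]}(θ) + β^{[θ₂,θ₄]}(θ) − η·(β^{[θ₁,θ₂]}(θ) + β^{[θ₃,θ₄]}(θ)) − (1−η)·(β^{[θ₂,θ₃]}(θ) + β^{[θ₁,θ₄]}(θ)) = 0. -/

import Mathlib

/-!
Writing `s(a, b) = sin ((b - a) / 2)` for the half-chord between two points of the circle, the six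
functions vanish outside `[θ₁, θ₄]`, and on each of the arcs `[θ₁, θ₂]`, `[θ₂, θ₃]`, `[θ₃, θ₄]` the
identity becomes, after clearing denominators, a combination of instances of Ptolemy's relation
`s(a, c) s(b, d) = s(a, b) s(c, d) + s(a, d) s(b, c)` (an identity for all real `a, b, c, d`).
Ptolemy's relation for `θ₁, θ₂, θ₃, θ₄` also gives `1 - η = s(θ₁, θ₄) s(θ₂, θ₃) / (s(θ₁, θ₃) s(θ₂, θ₄))`.
-/

open Real Set

/-- Coolness function on the circle:
`β^{[p,q]}(θ) = 2 sin((θ-p)/2) sin((q-θ)/2) / sin((q-p)/2)` on `[p,q]`, `0` outside. -/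
noncomputable def betaCirc (p q θ : ℝ) : ℝ :=
  if θ ∈ Set.Icc p q then
    2 * Real.sin ((θ - p) / 2) * Real.sin ((q - θ) / 2) / Real.sin ((q - p) / 2)
  else 0

theorem ptolemy_sin_half_sub (a b c d : ℝ) :
    sin ((c - a) / 2) * sin ((d - b) / 2) =
      sin ((b - a) / 2) * sin ((d - c) / 2) + sin ((d - a) / 2) * sin ((c - b) / 2) := by
  simp only [sub_div, sin_sub]
  ring

theorem sin_half_sub_ne_zero {a b : ℝ} (hab : a < b) (hba : b - a < 2 * π) :
    sin ((b - a) / 2) ≠ 0 :=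
  (sin_pos_of_pos_of_lt_pi (by linarith) (by linarith)).ne'

section betaCirc

variable {p q θ : ℝ}

theorem betaCirc_of_le_left (h : θ ≤ p) : betaCirc p q θ = 0 := by
  rw [betaCirc]
  split_ifs with hθ
  · simp [le_antisymm h hθ.1]
  · rfl

theorem betaCirc_of_right_le (h : q ≤ θ) : betaCirc p q θ = 0 := by
  rw [betaCirc]
  split_ifs with hθ
  · simp [le_antisymm hθ.2 h]
  · rfl

theorem betaCirc_of_mem_Icc (h : θ ∈ Icc p q) :
    betaCirc p q θ = 2 * sin ((θ - p) / 2) * sin ((q - θ) / 2) / sin ((q - p) / 2) :=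
  if_pos h

end betaCirc

noncomputable def chordCrossRatio (θ₁ θ₂ θ₃ θ₄ : ℝ) : ℝ :=
  sin ((θ₂ - θ₁) / 2) * sin ((θ₄ - θ₃) / 2) / (sin ((θ₃ - θ₁) / 2) * sin ((θ₄ - θ₂) / 2))

noncomputable def fixedPointDefect (θ₁ θ₂ θ₃ θ₄ θ : ℝ) : ℝ :=
  betaCirc θ₁ θ₃ θ + betaCirc θ₂ θ₄ θ
    - chordCrossRatio θ₁ θ₂ θ₃ θ₄ * (betaCirc θ₁ θ₂ θ + betaCirc θ₃ θ₄ θ)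
    - (1 - chordCrossRatio θ₁ θ₂ θ₃ θ₄) * (betaCirc θ₂ θ₃ θ + betaCirc θ₁ θ₄ θ)

section fixedPointDefect

variable {θ₁ θ₂ θ₃ θ₄ θ : ℝ}

theorem one_sub_chordCrossRatio (h13 : sin ((θ₃ - θ₁) / 2) ≠ 0) (h24 : sin ((θ₄ - θ₂) / 2) ≠ 0) :
    1 - chordCrossRatio θ₁ θ₂ θ₃ θ₄ =
      sin ((θ₄ - θ₁) / 2) * sin ((θ₃ - θ₂) / 2) / (sin ((θ₃ - θ₁) / 2) * sin ((θ₄ - θ₂) / 2)) := by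
  rw [chordCrossRatio]
  field_simp
  linear_combination ptolemy_sin_half_sub θ₁ θ₂ θ₃ θ₄

theorem fixedPointDefect_of_le_left (h : θ ≤ θ₁) (h12 : θ₁ ≤ θ₂) (h23 : θ₂ ≤ θ₃) :
    fixedPointDefect θ₁ θ₂ θ₃ θ₄ θ = 0 := by
  simp only [fixedPointDefect, betaCirc_of_le_left h, betaCirc_of_le_left (h.trans h12),
    betaCirc_of_le_left ((h.trans h12).trans h23)]
  ring

theorem fixedPointDefect_of_right_le (h : θ₄ ≤ θ) (h23 : θ₂ ≤ θ₃) (h34 : θ₃ ≤ θ₄) :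
    fixedPointDefect θ₁ θ₂ θ₃ θ₄ θ = 0 := by
  simp only [fixedPointDefect, betaCirc_of_right_le h, betaCirc_of_right_le (h34.trans h),
    betaCirc_of_right_le ((h23.trans h34).trans h)]
  ring

theorem fixedPointDefect_of_mem_Icc₁₂ (h : θ ∈ Icc θ₁ θ₂) (h12 : θ₁ < θ₂) (h23 : θ₂ < θ₃)
    (h34 : θ₃ < θ₄) (hlen : θ₄ - θ₁ < 2 * π) : fixedPointDefect θ₁ θ₂ θ₃ θ₄ θ = 0 := by
  have n12 := sin_half_sub_ne_zero h12 (by linarith)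
  have n13 := sin_half_sub_ne_zero (h12.trans h23) (by linarith)
  have n14 := sin_half_sub_ne_zero ((h12.trans h23).trans h34) hlen
  have n24 := sin_half_sub_ne_zero (h23.trans h34) (by linarith)
  rw [fixedPointDefect, one_sub_chordCrossRatio n13 n24, chordCrossRatio,
    betaCirc_of_mem_Icc ⟨h.1, by linarith [h.2]⟩, betaCirc_of_le_left h.2, betaCirc_of_mem_Icc h,
    betaCirc_of_le_left (by linarith [h.2]), betaCirc_of_le_left h.2,
    betaCirc_of_mem_Icc ⟨h.1, by linarith [h.2]⟩]
  field_simp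
  linear_combination 2 * sin ((θ - θ₁) / 2) * ptolemy_sin_half_sub θ θ₂ θ₃ θ₄

theorem fixedPointDefect_of_mem_Icc₂₃ (h : θ ∈ Icc θ₂ θ₃) (h12 : θ₁ < θ₂) (h23 : θ₂ < θ₃)
    (h34 : θ₃ < θ₄) (hlen : θ₄ - θ₁ < 2 * π) : fixedPointDefect θ₁ θ₂ θ₃ θ₄ θ = 0 := by
  have n13 := sin_half_sub_ne_zero (h12.trans h23) (by linarith)
  have n14 := sin_half_sub_ne_zero ((h12.trans h23).trans h34) hlen
  have n23 := sin_half_sub_ne_zero h23 (by linarith)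
  have n24 := sin_half_sub_ne_zero (h23.trans h34) (by linarith)
  rw [fixedPointDefect, one_sub_chordCrossRatio n13 n24,
    betaCirc_of_mem_Icc ⟨by linarith [h.1], h.2⟩, betaCirc_of_mem_Icc ⟨h.1, by linarith [h.2]⟩,
    betaCirc_of_right_le h.1, betaCirc_of_le_left h.2, betaCirc_of_mem_Icc h,
    betaCirc_of_mem_Icc ⟨by linarith [h.1], by linarith [h.2]⟩]
  field_simp
  linear_combination 2 * sin ((θ - θ₂) / 2) * ptolemy_sin_half_sub θ₁ θ θ₃ θ₄
    - 2 * sin ((θ - θ₁) / 2) * ptolemy_sin_half_sub θ₂ θ θ₃ θ₄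

theorem fixedPointDefect_of_mem_Icc₃₄ (h : θ ∈ Icc θ₃ θ₄) (h12 : θ₁ < θ₂) (h23 : θ₂ < θ₃)
    (h34 : θ₃ < θ₄) (hlen : θ₄ - θ₁ < 2 * π) : fixedPointDefect θ₁ θ₂ θ₃ θ₄ θ = 0 := by
  have n13 := sin_half_sub_ne_zero (h12.trans h23) (by linarith)
  have n14 := sin_half_sub_ne_zero ((h12.trans h23).trans h34) hlen
  have n24 := sin_half_sub_ne_zero (h23.trans h34) (by linarith)
  have n34 := sin_half_sub_ne_zero h34 (by linarith)
  rw [fixedPointDefect, one_sub_chordCrossRatio n13 n24, chordCrossRatio,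
    betaCirc_of_right_le h.1, betaCirc_of_mem_Icc ⟨by linarith [h.1], h.2⟩,
    betaCirc_of_right_le (by linarith [h.1]), betaCirc_of_mem_Icc h, betaCirc_of_right_le h.1,
    betaCirc_of_mem_Icc ⟨by linarith [h.1], h.2⟩]
  field_simp
  linear_combination 2 * sin ((θ₄ - θ) / 2) * ptolemy_sin_half_sub θ₁ θ₂ θ₃ θ

end fixedPointDefect

/-- The vector fixed-point identity for coolness functions on the circle. -/
theorem stmt_2 (θ₁ θ₂ θ₃ θ₄ : ℝ) (h12 : θ₁ < θ₂) (h23 : θ₂ < θ₃) (h34 : θ₃ < θ₄)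
    (hlen : θ₄ - θ₁ < 2 * π)
    (η : ℝ)
    (hη : η = (Real.sin ((θ₂ - θ₁) / 2) * Real.sin ((θ₄ - θ₃) / 2)) /
      (Real.sin ((θ₃ - θ₁) / 2) * Real.sin ((θ₄ - θ₂) / 2))) :
    ∀ θ : ℝ,
      betaCirc θ₁ θ₃ θ + betaCirc θ₂ θ₄ θ
        - η * (betaCirc θ₁ θ₂ θ + betaCirc θ₃ θ₄ θ)
        - (1 - η) * (betaCirc θ₂ θ₃ θ + betaCirc θ₁ θ₄ θ) = 0 := by
  subst hη
  show ∀ θ, fixedPointDefect θ₁ θ₂ θ₃ θ₄ θ = 0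
  intro θ
  rcases le_or_gt θ θ₁ with h1 | h1
  · exact fixedPointDefect_of_le_left h1 h12.le h23.le
  rcases le_or_gt θ₄ θ with h4 | h4
  · exact fixedPointDefect_of_right_le h4 h23.le h34.le
  rcases le_total θ θ₂ with h2 | h2
  · exact fixedPointDefect_of_mem_Icc₁₂ ⟨h1.le, h2⟩ h12 h23 h34 hlen
  rcases le_total θ θ₃ with h3 | h3
  · exact fixedPointDefect_of_mem_Icc₂₃ ⟨h2, h3⟩ h12 h23 h34 hlen
  · exact fixedPointDefect_of_mem_Icc₃₄ ⟨h3, h4.le⟩ h12 h23 h34 hlen
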